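/- arXiv:funct-an/9405004 — 4 statements merged into one kernel-verified Lean document; each statement's English description precedes it below -/
import Mathlib

section
/- Let L be a completely distributive complete lattice. For a ∈ L define a₋ := ⨆{b ∈ L : ¬(a ≤ b)}. Then ⨆{a ∈ L : a₋ ≠ ⊤} = ⊤. -/
/-- **Lemma 4.4(ii) (lattice form).** In a completely distributive complete
lattice, with `a₋ := ⨆{b : ¬(a ≤ b)}`, one has `⨆{a : a₋ ≠ ⊤} = ⊤`. -/
theorem sSup_of_completely_distrib_minus_ne_top
    {L : Type*} [CompletelyDistribLattice L] :
    sSup {a : L | sSup {b : L | ¬ a ≤ b} ≠ ⊤} = ⊤ := by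
  -- Index type: sets whose sup is ⊤
  set T : Set L := {a : L | sSup {b : L | ¬ a ≤ b} ≠ ⊤} with hT
  have key : (⨅ S : {S : Set L // sSup S = ⊤}, ⨆ b : S.1, (b : L)) =
      ⨆ g : (∀ S : {S : Set L // sSup S = ⊤}, S.1), ⨅ S, (g S : L) :=
    iInf_iSup_eq
  have hLHS : (⨅ S : {S : Set L // sSup S = ⊤}, ⨆ b : S.1, (b : L)) = ⊤ := by
    simp only [iSup_subtype', sSup_eq_iSup'] at *
    refine top_unique (le_iInf fun S => ?_)
    rw [← sSup_eq_iSup', S.2]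
  rw [hLHS] at key
  refine top_unique ?_
  rw [key]
  refine iSup_le fun g => le_sSup ?_
  -- a_g := ⨅ S, g S belongs to T
  intro h
  have hS : sSup {b : L | ¬ (⨅ S, (g S : L)) ≤ b} = ⊤ := h
  set a : L := ⨅ S : {S : Set L // sSup S = ⊤}, (g S : L)
  have : a ≤ (g ⟨{b : L | ¬ a ≤ b}, hS⟩ : L) := iInf_le _ _
  exact (g ⟨{b : L | ¬ a ≤ b}, hS⟩).2 this
end

section
/- Let Y = {x₁, …, x_m} be a finite set equipped with a strict partial order ≺ (an irreflexive, transitive, antisymmetric relation). For each i let G_i be an abelian group equipped with an injective group homomorphism from the multiplicative group ℂˣ of nonzero complex numbers into G_i; identify each λ ∈ ℂˣ with its image and write λ·g for the corresponding product in G_i. Suppose that to each pair with x_i ≺ x_j is associated a pair (c_ij, d_ij) with c_ij ∈ G_i and d_ij ∈ G_j such that: (i) if x_i ≺ x_j and x_i ≺ x_k then c_ij = λ·c_ik for some λ ∈ ℂˣ; (ii) if x_i ≺ x_j and x_k ≺ x_j then d_ij = λ·d_kj for some λ ∈ ℂˣ; (iii) if x_i ≺ x_j ≺ x_k then d_ij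 = λ·c_jk for some λ ∈ ℂˣ; (iv) if x_i ≺ x_j ≺ x_k and λ ∈ ℂˣ satisfies d_ij = λ·c_jk, then there exists μ ∈ ℂˣ with c_ik = μ·λ⁻¹·c_ij and d_ik = μ·d_jk. Suppose further that X ⊆ Y is a subset such that every 1-cycle of the comparability graph of (X, ≺) is a ℤ-linear combination of boundaries of triangles of the comparability graph of (Y, ≺). Then there exists a choice of elements g_i ∈ G_i, for each x_i ∈ X, such that for every pair x_i ≺ x_j with x_i, x_j ∈ X there is λ_ij ∈ ℂˣ with c_ij = λ_ij·g_i and d_ij = λ_ij·g_j. -/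
attribute [local instance] Classical.propDecidable

noncomputable section

/-- The adjacency relation of the comparability graph of a relation `E`. -/
def Adjacent {X : Type*} (E : X → X → Prop) (x y : X) : Prop :=
  x ≠ y ∧ (E x y ∨ E y x)

/-- A 1-cycle of the comparability graph of `E` : a finitely supported,
antisymmetric, integer-valued function on ordered pairs of adjacent points
whose "divergence" at every point vanishes. -/
def IsOneCycle {X : Type*} (E : X → X → Prop) (c : X → X → ℤ) : Prop :=
  (∀ x y, c x y ≠ 0 → Adjacent E x y) ∧
  (∀ x y, c x y = - c y x) ∧
  {p : X × X | c p.1 p.2 ≠ 0}.Finite ∧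
  (∀ x, ∑ᶠ y, c x y = 0)

/-- The boundary of the triangle `(a, b, c)`. -/
def triangleBoundary {X : Type*} (a b c : X) : X → X → ℤ := fun u v =>
  (if u = a ∧ v = b then 1 else 0) + (if u = b ∧ v = c then 1 else 0) +
  (if u = c ∧ v = a then 1 else 0) - (if u = b ∧ v = a then 1 else 0) -
  (if u = c ∧ v = b then 1 else 0) - (if u = a ∧ v = c then 1 else 0)

/-- The boundaries of triangles (triples of mutually adjacent points) of the
comparability graph of `E`. -/
def triangleBoundaries {X : Type*} (E : X → X → Prop) : Set (X → X → ℤ) :=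
  {d | ∃ a b c : X, Adjacent E a b ∧ Adjacent E b c ∧ Adjacent E a c ∧
    d = triangleBoundary a b c}

/-- Every 1-cycle of the comparability graph of `E` is a `ℤ`-linear
combination of boundaries of triangles. -/
def FirstHomologyVanishes {X : Type*} (E : X → X → Prop) : Prop :=
  ∀ c : X → X → ℤ, IsOneCycle E c → c ∈ AddSubgroup.closure (triangleBoundaries E)


/-!
Choose base points `eᵢ` with `c_ij ∈ ℂˣ·eᵢ` and `d_ij ∈ ℂˣ·eⱼ`, and write `c_ij = α_ij·eᵢ`,
`d_ij = β_ij·eⱼ`. Conditions (iii) and (iv) say precisely that `f_ij = β_ij / α_ij` satisfies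
`f_ik = f_ij·f_jk` along chains `i ≺ j ≺ k`. Extended by `1` off `≺`, the cochain `f` then pairs
trivially with every triangle boundary of `Y`, hence with every 1-cycle of `X`, in particular with
every closed walk in the comparability graph of `X`. Integrating `f` along walks from a base point
of each connected component gives `t` with `f_ij = t_j / t_i` on `X`, and `gᵢ = tᵢ·eᵢ` works with
`λ_ij = α_ij / tᵢ`.
-/

namespace ScalarCocycle

section Chains

variable {Y : Type*}

def edgeChain (u v : Y) : Y → Y → ℤ := fun p q =>
  (if p = u ∧ q = v then 1 else 0) - (if p = v ∧ q = u then 1 else 0)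

lemma edgeChain_antisymm (u v p q : Y) : edgeChain u v p q = -edgeChain u v q p := by
  simp only [edgeChain, and_comm]
  ring

lemma edgeChain_swap (u v : Y) : edgeChain v u = -edgeChain u v := by
  funext p q
  simp only [edgeChain, Pi.neg_apply]
  ring

lemma eq_and_eq_or_eq_and_eq_of_edgeChain_ne_zero {u v p q : Y} (h : edgeChain u v p q ≠ 0) :
    p = u ∧ q = v ∨ p = v ∧ q = u := by
  by_contra! hpq
  rw [edgeChain, if_neg (not_and.2 hpq.1), if_neg (not_and.2 hpq.2), sub_zero] at h
  exact h rfl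

lemma sum_edgeChain [Fintype Y] (u v p : Y) :
    ∑ q, edgeChain u v p q = (if p = u then 1 else 0) - (if p = v then 1 else 0) := by
  simp [edgeChain, Finset.sum_sub_distrib, ite_and]

lemma triangleBoundary_eq (a b c : Y) :
    triangleBoundary a b c = edgeChain a b + edgeChain b c + edgeChain c a := by
  funext p q
  simp only [triangleBoundary, edgeChain, Pi.add_apply]
  ring

lemma triangleBoundary_rotate (a b c : Y) : triangleBoundary b c a = triangleBoundary a b c := by
  simp only [triangleBoundary_eq]
  abel

lemma triangleBoundary_reverse (a b c : Y) : triangleBoundary c b a = -triangleBoundary a b c := by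
  simp only [triangleBoundary_eq, edgeChain_swap b a, edgeChain_swap c b, edgeChain_swap a c]
  abel

end Chains

section ChainProd

variable {Y M : Type*} [Fintype Y] [CommGroup M] (f : Y → Y → M)

def chainProd (z : Y → Y → ℤ) : M :=
  ∏ p, ∏ q, f p q ^ z p q

@[simp] lemma chainProd_zero : chainProd f 0 = 1 := by simp [chainProd]

@[simp] lemma chainProd_add (z w : Y → Y → ℤ) :
    chainProd f (z + w) = chainProd f z * chainProd f w := by
  simp [chainProd, zpow_add, Finset.prod_mul_distrib]

@[simp] lemma chainProd_neg (z : Y → Y → ℤ) : chainProd f (-z) = (chainProd f z)⁻¹ := by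
  simp [chainProd, zpow_neg]

lemma chainProd_edgeChain (u v : Y) : chainProd f (edgeChain u v) = f u v / f v u := by
  simp only [chainProd, edgeChain, zpow_sub, Finset.prod_mul_distrib, Finset.prod_inv_distrib,
    div_eq_mul_inv]
  simp [ite_and]

lemma chainProd_eq_one_of_mem_closure {S : Set (Y → Y → ℤ)} (hS : ∀ z ∈ S, chainProd f z = 1)
    {z : Y → Y → ℤ} (hz : z ∈ AddSubgroup.closure S) : chainProd f z = 1 := by
  induction hz using AddSubgroup.closure_induction with
  | mem z hz => exact hS z hz
  | zero => exact chainProd_zero f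
  | add z w _ _ hz hw => rw [chainProd_add, hz, hw, one_mul]
  | neg z _ hz => rw [chainProd_neg, hz, inv_one]

end ChainProd

section Walks

open SimpleGraph

variable {Y : Type*} {G : SimpleGraph Y}

def walkChain : {u v : Y} → G.Walk u v → (Y → Y → ℤ)
  | _, _, .nil => 0
  | u, _, .cons (v := w) _ p => edgeChain u w + walkChain p

@[simp] lemma walkChain_nil {u : Y} : walkChain (Walk.nil : G.Walk u u) = 0 := rfl

@[simp] lemma walkChain_cons {u v w : Y} (h : G.Adj u v) (p : G.Walk v w) :
    walkChain (.cons h p) = edgeChain u v + walkChain p := rfl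

@[simp] lemma walkChain_copy {u v u' v' : Y} (p : G.Walk u v) (hu : u = u') (hv : v = v') :
    walkChain (p.copy hu hv) = walkChain p := by
  subst hu hv
  rfl

@[simp] lemma walkChain_append {u v w : Y} (p : G.Walk u v) (q : G.Walk v w) :
    walkChain (p.append q) = walkChain p + walkChain q := by
  induction p with
  | nil => simp
  | cons h p ih => simp [ih, add_assoc]

@[simp] lemma walkChain_reverse {u v : Y} (p : G.Walk u v) :
    walkChain p.reverse = -walkChain p := by
  induction p with
  | nil => simp
  | cons h p ih =>
    rw [Walk.reverse_cons, walkChain_append, ih, walkChain_cons, walkChain_cons, walkChain_nil,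
      edgeChain_swap, add_zero, neg_add, add_comm]

lemma walkChain_antisymm {u v : Y} (p : G.Walk u v) (x y : Y) :
    walkChain p x y = -walkChain p y x := by
  induction p with
  | nil => simp
  | cons h p ih => simp [ih, edgeChain_antisymm _ _ x y, add_comm]

lemma adj_of_walkChain_ne_zero {u v : Y} (p : G.Walk u v) {x y : Y} (h : walkChain p x y ≠ 0) :
    G.Adj x y := by
  induction p with
  | nil => simp at h
  | @cons a b _ hab p ih =>
    by_cases hp : walkChain p x y = 0
    · rw [walkChain_cons, Pi.add_apply, Pi.add_apply, hp, add_zero] at h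
      rcases eq_and_eq_or_eq_and_eq_of_edgeChain_ne_zero h with ⟨rfl, rfl⟩ | ⟨rfl, rfl⟩
      exacts [hab, hab.symm]
    · exact ih hp

lemma sum_walkChain [Fintype Y] {u v : Y} (p : G.Walk u v) (x : Y) :
    ∑ y, walkChain p x y = (if x = u then 1 else 0) - (if x = v then 1 else 0) := by
  induction p with
  | nil => simp
  | cons h p ih =>
    simp only [walkChain_cons, Pi.add_apply, Finset.sum_add_distrib, ih, sum_edgeChain]
    ring

lemma isOneCycle_walkChain [Fintype Y] (E : Y → Y → Prop) {u : Y} (p : (fromRel E).Walk u u) :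
    IsOneCycle E (walkChain p) :=
  ⟨fun _ _ h => adj_of_walkChain_ne_zero p h, walkChain_antisymm p, Set.toFinite _,
    fun x => by rw [finsum_eq_sum_of_fintype, sum_walkChain, sub_self]⟩

lemma exists_potential_of_chainProd_walkChain_eq_one {M : Type*} [Fintype Y] [CommGroup M]
    (f : Y → Y → M) (hf : ∀ u (p : G.Walk u u), chainProd f (walkChain p) = 1) :
    ∃ t : Y → M, ∀ u v, G.Adj u v → t v = f u v / f v u * t u := by
  have hbase : ∀ x, G.Reachable (G.connectedComponentMk x).out x := fun x =>
    ConnectedComponent.exact (Quot.out_eq _)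
  refine ⟨fun x => chainProd f (walkChain (hbase x).some), fun u v huv => ?_⟩
  have hsame : (G.connectedComponentMk u).out = (G.connectedComponentMk v).out := by
    rw [ConnectedComponent.sound huv.reachable]
  have hloop :=
    hf _ (((hbase u).some.concat huv).append ((hbase v).some.reverse.copy rfl hsame.symm))
  simp only [Walk.concat, walkChain_append, walkChain_copy, walkChain_reverse, walkChain_cons,
    walkChain_nil, add_zero, chainProd_add, chainProd_neg, chainProd_edgeChain] at hloop
  dsimp only
  rw [← mul_inv_eq_one.mp hloop, mul_comm]

end Walks

section StrictOrder

variable {Y : Type*} {r : Y → Y → Prop}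

lemma asymm_of_irrefl_of_trans (hirr : ∀ i, ¬ r i i) (htrans : ∀ i j k, r i j → r j k → r i k)
    {i j : Y} (hij : r i j) : ¬ r j i :=
  fun hji => hirr i (htrans _ _ _ hij hji)

lemma exists_chain_of_mem_triangleBoundaries (hirr : ∀ i, ¬ r i i)
    (htrans : ∀ i j k, r i j → r j k → r i k) {z : Y → Y → ℤ} (hz : z ∈ triangleBoundaries r) :
    ∃ x y w, r x y ∧ r y w ∧ (z = triangleBoundary x y w ∨ z = -triangleBoundary x y w) := by
  obtain ⟨a, b, c, hab, hbc, hac, rfl⟩ := hz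
  rcases hab.2 with hab | hba <;> rcases hbc.2 with hbc | hcb <;> rcases hac.2 with hac | hca
  · exact ⟨a, b, c, hab, hbc, .inl rfl⟩
  · exact (hirr a (htrans _ _ _ (htrans _ _ _ hab hbc) hca)).elim
  · refine ⟨a, c, b, hac, hcb, .inr ?_⟩
    rw [triangleBoundary_reverse b c a, neg_neg, triangleBoundary_rotate a b c]
  · exact ⟨c, a, b, hca, hab, .inl (triangleBoundary_rotate c a b)⟩
  · refine ⟨b, a, c, hba, hac, .inr ?_⟩
    rw [triangleBoundary_reverse c a b, neg_neg, triangleBoundary_rotate c a b]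
  · exact ⟨b, c, a, hbc, hca, .inl (triangleBoundary_rotate a b c).symm⟩
  · exact (hirr a (htrans _ _ _ hac (htrans _ _ _ hcb hba))).elim
  · exact ⟨c, b, a, hcb, hba, .inr (by rw [triangleBoundary_reverse a b c, neg_neg])⟩

variable {M : Type*} [Fintype Y] [CommGroup M] {f : Y → Y → M}

lemma chainProd_triangleBoundary_of_chain (hirr : ∀ i, ¬ r i i)
    (htrans : ∀ i j k, r i j → r j k → r i k) (hf : ∀ i j, ¬ r i j → f i j = 1)
    (hcocycle : ∀ i j k, r i j → r j k → f i k = f i j * f j k)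
    {x y w : Y} (hxy : r x y) (hyw : r y w) : chainProd f (triangleBoundary x y w) = 1 := by
  have asymm : ∀ {i j}, r i j → ¬ r j i := asymm_of_irrefl_of_trans hirr htrans
  rw [triangleBoundary_eq, chainProd_add, chainProd_add, chainProd_edgeChain, chainProd_edgeChain,
    chainProd_edgeChain, hf y x (asymm hxy), hf w y (asymm hyw),
    hf w x (asymm (htrans _ _ _ hxy hyw)), hcocycle x y w hxy hyw, div_one, div_one, one_div,
    mul_inv_cancel]

theorem exists_potential_of_chain_cocycle (hirr : ∀ i, ¬ r i i)
    (htrans : ∀ i j k, r i j → r j k → r i k) (X : Set Y)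
    (hX : ∀ cyc : Y → Y → ℤ, IsOneCycle (fun u v => u ∈ X ∧ v ∈ X ∧ r u v) cyc →
      cyc ∈ AddSubgroup.closure (triangleBoundaries r))
    (hf : ∀ i j, ¬ r i j → f i j = 1) (hcocycle : ∀ i j k, r i j → r j k → f i k = f i j * f j k) :
    ∃ t : Y → M, ∀ i ∈ X, ∀ j ∈ X, r i j → t j = f i j * t i := by
  have htriangle : ∀ z ∈ triangleBoundaries r, chainProd f z = 1 := by
    intro z hz
    obtain ⟨x, y, w, hxy, hyw, rfl | rfl⟩ := exists_chain_of_mem_triangleBoundaries hirr htrans hz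
    all_goals simp only [chainProd_neg, inv_eq_one,
      chainProd_triangleBoundary_of_chain hirr htrans hf hcocycle hxy hyw]
  obtain ⟨t, ht⟩ := exists_potential_of_chainProd_walkChain_eq_one f fun _ p =>
    chainProd_eq_one_of_mem_closure f htriangle (hX _ (isOneCycle_walkChain _ p))
  refine ⟨t, fun i hi j hj hij => ?_⟩
  have hadj : (SimpleGraph.fromRel fun u v => u ∈ X ∧ v ∈ X ∧ r u v).Adj i j :=
    ⟨fun h => hirr i (h ▸ hij), .inl ⟨hi, hj, hij⟩⟩
  rw [ht i j hadj, hf j i (asymm_of_irrefl_of_trans hirr htrans hij), div_one]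

end StrictOrder

lemma exists_common_base {Y H : Type*} [Monoid H] {G : Y → Type*} [∀ i, Monoid (G i)]
    (emb : ∀ i, H →* G i) (r : Y → Y → Prop) (c : ∀ i, Y → G i) (d : Y → ∀ j, G j)
    (h1 : ∀ i j k, r i j → r i k → ∃ lam : H, c i j = emb i lam * c i k)
    (h2 : ∀ i j k, r i j → r k j → ∃ lam : H, d i j = emb j lam * d k j)
    (h3 : ∀ i j k, r i j → r j k → ∃ lam : H, d i j = emb j lam * c j k) :
    ∃ e : ∀ i, G i, (∀ i j, r i j → ∃ a : H, c i j = emb i a * e i) ∧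
      (∀ i j, r i j → ∃ b : H, d i j = emb j b * e j) := by
  refine ⟨fun i => if h : ∃ j, r i j then c i h.choose
    else if h' : ∃ k, r k i then d h'.choose i else 1, fun i j hij => ?_, fun i j hij => ?_⟩
  · have h : ∃ j, r i j := ⟨j, hij⟩
    simpa only [dif_pos h] using h1 i j _ hij h.choose_spec
  · by_cases h : ∃ k, r j k
    · simpa only [dif_pos h] using h3 i j _ hij h.choose_spec
    · have h' : ∃ k, r k j := ⟨i, hij⟩
      simpa only [dif_neg h, dif_pos h'] using h2 i j _ hij h'.choose_spec

end ScalarCocycle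

theorem scalar_cocycle_trivialization_general
    {Y : Type*} [Fintype Y] (r : Y → Y → Prop)
    (hirr : ∀ i, ¬ r i i)
    (htrans : ∀ i j k, r i j → r j k → r i k)
    (G : Y → Type*) [∀ i, CommGroup (G i)]
    (emb : ∀ i, ℂˣ →* G i) (hemb : ∀ i, Function.Injective (emb i))
    (c : ∀ (i : Y), Y → G i) (d : ∀ (_ : Y) (j : Y), G j)
    (h1 : ∀ i j k, r i j → r i k → ∃ lam : ℂˣ, c i j = emb i lam * c i k)
    (h2 : ∀ i j k, r i j → r k j → ∃ lam : ℂˣ, d i j = emb j lam * d k j)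
    (h3 : ∀ i j k, r i j → r j k → ∃ lam : ℂˣ, d i j = emb j lam * c j k)
    (h4 : ∀ i j k, r i j → r j k → ∀ lam : ℂˣ, d i j = emb j lam * c j k →
      ∃ mu : ℂˣ, c i k = emb i (mu * lam⁻¹) * c i j ∧ d i k = emb k mu * d j k)
    (X : Set Y)
    (hX : ∀ cyc : Y → Y → ℤ,
      IsOneCycle (fun u v => u ∈ X ∧ v ∈ X ∧ r u v) cyc →
      cyc ∈ AddSubgroup.closure (triangleBoundaries r)) :
    ∃ g : ∀ i, G i, ∀ i ∈ X, ∀ j ∈ X, r i j →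
      ∃ lam : ℂˣ, c i j = emb i lam * g i ∧ d i j = emb j lam * g j := by
  obtain ⟨e, hc, hd⟩ := ScalarCocycle.exists_common_base emb r c d h1 h2 h3
  choose α hα using hc
  choose β hβ using hd
  have cancel : ∀ i {a b : ℂˣ}, emb i a * e i = emb i b * e i → a = b :=
    fun i _ _ h => hemb i (mul_right_cancel h)
  let f : Y → Y → ℂˣ := fun i j => if h : r i j then β i j h / α i j h else 1
  have hcocycle : ∀ i j k, r i j → r j k → f i k = f i j * f j k := by
    intro i j k hij hjk
    have hik := htrans i j k hij hjk
    obtain ⟨mu, hα_ik, hβ_ik⟩ := h4 i j k hij hjk (β i j hij / α j k hjk) <| by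
      rw [hβ i j hij, hα j k hjk, ← mul_assoc, ← map_mul, div_mul_cancel]
    rw [hα i k hik, hα i j hij, ← mul_assoc, ← map_mul] at hα_ik
    rw [hβ i k hik, hβ j k hjk, ← mul_assoc, ← map_mul] at hβ_ik
    simp only [f, dif_pos hij, dif_pos hjk, dif_pos hik, cancel i hα_ik, cancel k hβ_ik]
    rw [mul_assoc mu, mul_div_mul_left_eq_div]
    simp [div_eq_mul_inv, mul_comm, mul_left_comm, mul_assoc]
  obtain ⟨t, ht⟩ := ScalarCocycle.exists_potential_of_chain_cocycle hirr htrans X hX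
    (fun i j hij => dif_neg hij) hcocycle
  refine ⟨fun i => emb i (t i) * e i, fun i hi j hj hij => ⟨α i j hij / t i, ?_, ?_⟩⟩
  · rw [hα i j hij, ← mul_assoc, ← map_mul, div_mul_cancel]
  · rw [hβ i j hij, ← mul_assoc, ← map_mul, ht i hi j hj hij, dif_pos hij]
    simp [div_eq_mul_inv, mul_comm, mul_left_comm, mul_assoc]

/-- **Lemma 4.5.** Let `Y` be a finite set with a strict partial order `r`, let
`Gᵢ` be abelian groups containing (injective images of) `ℂˣ`, and let pairs
`(c_ij, d_ij)` be given for `i ≺ j`, satisfying the compatibility conditions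
(i)–(iv).  If `X ⊆ Y` is such that every 1-cycle of the comparability graph of
`(X, ≺)` is a `ℤ`-combination of triangle boundaries of `(Y, ≺)`, then there
are `gᵢ ∈ Gᵢ` (for `i ∈ X`) with `(c_ij, d_ij) = (λ_ij·g_i, λ_ij·g_j)` for all
pairs `i ≺ j` in `X`. -/
theorem scalar_cocycle_trivialization
    {Y : Type*} [Fintype Y] (r : Y → Y → Prop)
    (hirr : ∀ i, ¬ r i i)
    (htrans : ∀ i j k, r i j → r j k → r i k)
    (hanti : ∀ i j, r i j → r j i → i = j)
    (G : Y → Type*) [∀ i, CommGroup (G i)]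
    (emb : ∀ i, ℂˣ →* G i) (hemb : ∀ i, Function.Injective (emb i))
    (c : ∀ (i : Y), Y → G i) (d : ∀ (_ : Y) (j : Y), G j)
    (h1 : ∀ i j k, r i j → r i k → ∃ lam : ℂˣ, c i j = emb i lam * c i k)
    (h2 : ∀ i j k, r i j → r k j → ∃ lam : ℂˣ, d i j = emb j lam * d k j)
    (h3 : ∀ i j k, r i j → r j k → ∃ lam : ℂˣ, d i j = emb j lam * c j k)
    (h4 : ∀ i j k, r i j → r j k → ∀ lam : ℂˣ, d i j = emb j lam * c j k →
      ∃ mu : ℂˣ, c i k = emb i (mu * lam⁻¹) * c i j ∧ d i k = emb k mu * d j k)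
    (X : Set Y)
    (hX : ∀ cyc : Y → Y → ℤ,
      IsOneCycle (fun u v => u ∈ X ∧ v ∈ X ∧ r u v) cyc →
      cyc ∈ AddSubgroup.closure (triangleBoundaries r)) :
    ∃ g : ∀ i, G i, ∀ i ∈ X, ∀ j ∈ X, r i j →
      ∃ lam : ℂˣ, c i j = emb i lam * g i ∧ d i j = emb j lam * g j :=
  scalar_cocycle_trivialization_general r hirr htrans G emb hemb c d h1 h2 h3 h4 X hX
end
end

section
/- Let (Y, m) be a σ-finite measure space with m(Y) > 0, and let Φ₁, Φ₂, Φ₃ : Y × Y → ℂ be measurable functions that are essentially bounded with respect to the product measure m × m. Suppose that Φ₁(x,y)·Φ₂(y,z) = Φ₃(x,z) for (m × m × m)-almost every (x, y, z) ∈ Y × Y × Y. Then there exist bounded measurable functions θ, η : Y → ℂ such that Φ₃(x,z) = θ(x)·η(z) for (m × m)-almost every (x, z) ∈ Y × Y. -/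
open MeasureTheory

/-- **Kernel factorization step in Lemma 4.3.** If `Φ₁, Φ₂, Φ₃` are measurable
essentially bounded kernels on `Y × Y` with `Φ₁(x,y)Φ₂(y,z) = Φ₃(x,z)` for
almost every `(x,y,z)`, then `Φ₃` factors almost everywhere as
`Φ₃(x,z) = θ(x)·η(z)` with `θ, η` bounded measurable. -/
theorem kernel_factorization
    {Y : Type*} [MeasurableSpace Y] (m : Measure Y) [SigmaFinite m]
    (hm : 0 < m Set.univ)
    (Φ₁ Φ₂ Φ₃ : Y × Y → ℂ)
    (hΦ₁ : Measurable Φ₁) (hΦ₂ : Measurable Φ₂) (hΦ₃ : Measurable Φ₃)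
    (hb₁ : ∃ C : ℝ, ∀ᵐ p ∂(m.prod m), ‖Φ₁ p‖ ≤ C)
    (hb₂ : ∃ C : ℝ, ∀ᵐ p ∂(m.prod m), ‖Φ₂ p‖ ≤ C)
    (hb₃ : ∃ C : ℝ, ∀ᵐ p ∂(m.prod m), ‖Φ₃ p‖ ≤ C)
    (hmul : ∀ᵐ q ∂((m.prod m).prod m),
      Φ₁ (q.1.1, q.1.2) * Φ₂ (q.1.2, q.2) = Φ₃ (q.1.1, q.2)) :
    ∃ θ η : Y → ℂ, Measurable θ ∧ Measurable η ∧
      (∃ C : ℝ, ∀ y, ‖θ y‖ ≤ C) ∧ (∃ C : ℝ, ∀ y, ‖η y‖ ≤ C) ∧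
      ∀ᵐ p ∂(m.prod m), Φ₃ p = θ p.1 * η p.2 := by
  obtain ⟨C₁, hC₁⟩ := hb₁
  obtain ⟨C₂, hC₂⟩ := hb₂
  -- rearrange hmul to have `y` as the outer variable
  have Tmp : MeasurePreserving
      (fun q : Y × (Y × Y) => ((q.2.1, q.1), q.2.2))
      (m.prod (m.prod m)) ((m.prod m).prod m) := by
    have h1 : MeasurePreserving (Prod.swap : Y × (Y × Y) → (Y × Y) × Y)
        (m.prod (m.prod m)) ((m.prod m).prod m) := Measure.measurePreserving_swap
    have h2 : MeasurePreserving (MeasurableEquiv.prodAssoc : (Y × Y) × Y ≃ᵐ Y × (Y × Y))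
        ((m.prod m).prod m) (m.prod (m.prod m)) := measurePreserving_prodAssoc m m m
    have h3 : MeasurePreserving (Prod.map (id : Y → Y) (Prod.swap : Y × Y → Y × Y))
        (m.prod (m.prod m)) (m.prod (m.prod m)) :=
      (MeasurePreserving.id m).prod Measure.measurePreserving_swap
    have h4 : MeasurePreserving (MeasurableEquiv.prodAssoc.symm : Y × (Y × Y) ≃ᵐ (Y × Y) × Y)
        (m.prod (m.prod m)) ((m.prod m).prod m) :=
      h2.symm MeasurableEquiv.prodAssoc
    have h := ((h4.comp h3).comp h2).comp h1
    have hfun : (fun q : Y × (Y × Y) => ((q.2.1, q.1), q.2.2)) =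
        (MeasurableEquiv.prodAssoc.symm ∘ Prod.map (id : Y → Y) Prod.swap ∘
          MeasurableEquiv.prodAssoc ∘ Prod.swap) := by
      ext ⟨y, x, z⟩ <;> rfl
    rw [hfun]
    exact h
  have hmul' : ∀ᵐ y ∂m, ∀ᵐ p ∂(m.prod m),
      Φ₁ (p.1, y) * Φ₂ (y, p.2) = Φ₃ (p.1, p.2) :=
    Measure.ae_ae_of_ae_prod (Tmp.quasiMeasurePreserving.ae hmul)
  have hC₁' : ∀ᵐ y ∂m, ∀ᵐ x ∂m, ‖Φ₁ (x, y)‖ ≤ C₁ :=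
    Measure.ae_ae_of_ae_prod (Measure.measurePreserving_swap.quasiMeasurePreserving.ae hC₁)
  have hC₂' : ∀ᵐ y ∂m, ∀ᵐ z ∂m, ‖Φ₂ (y, z)‖ ≤ C₂ :=
    Measure.ae_ae_of_ae_prod hC₂
  have hne : m ≠ 0 := by
    intro h; rw [h] at hm; simp at hm
  have : ∀ᵐ y ∂m, (∀ᵐ p ∂(m.prod m), Φ₁ (p.1, y) * Φ₂ (y, p.2) = Φ₃ (p.1, p.2)) ∧
      (∀ᵐ x ∂m, ‖Φ₁ (x, y)‖ ≤ C₁) ∧ (∀ᵐ z ∂m, ‖Φ₂ (y, z)‖ ≤ C₂) := by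
    filter_upwards [hmul', hC₁', hC₂'] with y h1 h2 h3 using ⟨h1, h2, h3⟩
  have hB : (MeasureTheory.ae m).NeBot := ae_neBot.2 hne
  obtain ⟨y₀, hy₀mul, hy₀1, hy₀2⟩ := this.exists
  set θ : Y → ℂ := fun x => if ‖Φ₁ (x, y₀)‖ ≤ C₁ then Φ₁ (x, y₀) else 0 with hθ
  set η : Y → ℂ := fun z => if ‖Φ₂ (y₀, z)‖ ≤ C₂ then Φ₂ (y₀, z) else 0 with hη
  have mθ0 : Measurable (fun x => Φ₁ (x, y₀)) :=
    hΦ₁.comp (measurable_id.prodMk measurable_const)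
  have mη0 : Measurable (fun z => Φ₂ (y₀, z)) :=
    hΦ₂.comp (measurable_const.prodMk measurable_id)
  have msθ : MeasurableSet {x : Y | ‖Φ₁ (x, y₀)‖ ≤ C₁} :=
    measurableSet_le mθ0.norm measurable_const
  have msη : MeasurableSet {z : Y | ‖Φ₂ (y₀, z)‖ ≤ C₂} :=
    measurableSet_le mη0.norm measurable_const
  refine ⟨θ, η, Measurable.ite msθ mθ0 measurable_const,
    Measurable.ite msη mη0 measurable_const,
    ⟨max C₁ 0, fun y => ?_⟩, ⟨max C₂ 0, fun y => ?_⟩, ?_⟩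
  · simp only [hθ]
    split
    · exact le_trans (by assumption) (le_max_left _ _)
    · simp
  · simp only [hη]
    split
    · exact le_trans (by assumption) (le_max_left _ _)
    · simp
  · have l1 : ∀ᵐ p ∂(m.prod m), ‖Φ₁ (p.1, y₀)‖ ≤ C₁ :=
      Measure.quasiMeasurePreserving_fst.ae hy₀1
    have l2 : ∀ᵐ p ∂(m.prod m), ‖Φ₂ (y₀, p.2)‖ ≤ C₂ :=
      Measure.quasiMeasurePreserving_snd.ae hy₀2
    filter_upwards [hy₀mul, l1, l2] with p h hp1 hp2
    simp only [hθ, hη, if_pos hp1, if_pos hp2]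
    rw [← h]
end

section
/- Let H₁, H₂, H₃ be nonzero complex Hilbert spaces. Let A, A′ be invertible bounded operators on H₁, let C, C′ be invertible bounded operators on H₃, and let B be a bounded operator on H₂. Suppose that A X B Y C = A′ X Y C′ for every bounded operator X : H₂ → H₁ and every bounded operator Y : H₃ → H₂. Then there exists a nonzero complex number λ such that B = λ·I, the scalar multiple of the identity on H₂. -/
open scoped InnerProductSpace

private lemma aux_cancel_left {H : Type*} [NormedAddCommGroup H] [NormedSpace ℂ H]
    {T : H →L[ℂ] H} (hT : IsUnit T) (x : H) :
    (↑hT.unit⁻¹ : H →L[ℂ] H) (T x) = x := by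
  have h1 : ((↑hT.unit⁻¹ : H →L[ℂ] H) * T) = 1 := by
    simpa [hT.unit_spec] using hT.unit.inv_mul
  calc (↑hT.unit⁻¹ : H →L[ℂ] H) (T x) = ((↑hT.unit⁻¹ : H →L[ℂ] H) * T) x := rfl
    _ = x := by rw [h1]; rfl

private lemma aux_cancel_right {H : Type*} [NormedAddCommGroup H] [NormedSpace ℂ H]
    {T : H →L[ℂ] H} (hT : IsUnit T) (x : H) :
    T ((↑hT.unit⁻¹ : H →L[ℂ] H) x) = x := by
  have h1 : (T * (↑hT.unit⁻¹ : H →L[ℂ] H)) = 1 := by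
    simpa [hT.unit_spec] using hT.unit.mul_inv
  calc T ((↑hT.unit⁻¹ : H →L[ℂ] H) x) = (T * (↑hT.unit⁻¹ : H →L[ℂ] H)) x := rfl
    _ = x := by rw [h1]; rfl

private lemma aux_inj {H : Type*} [NormedAddCommGroup H] [NormedSpace ℂ H]
    {T : H →L[ℂ] H} (hT : IsUnit T) {x : H} (hx : T x = 0) : x = 0 := by
  have h1 := aux_cancel_left hT x
  rw [hx] at h1
  simpa using h1.symm

/-- **Middle-operator scalar claim (Section 4).** If `A, A′` are invertible on
`H₁`, `C, C′` invertible on `H₃`, `B` bounded on `H₂`, and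
`A X B Y C = A′ X Y C′` for all bounded `X : H₂ → H₁` and `Y : H₃ → H₂`, then
`B = λ·I` for some nonzero scalar `λ`. -/
theorem middle_operator_is_scalar
    {H₁ H₂ H₃ : Type*}
    [NormedAddCommGroup H₁] [InnerProductSpace ℂ H₁] [CompleteSpace H₁] [Nontrivial H₁]
    [NormedAddCommGroup H₂] [InnerProductSpace ℂ H₂] [CompleteSpace H₂] [Nontrivial H₂]
    [NormedAddCommGroup H₃] [InnerProductSpace ℂ H₃] [CompleteSpace H₃] [Nontrivial H₃]
    (A A' : H₁ →L[ℂ] H₁) (C C' : H₃ →L[ℂ] H₃) (B : H₂ →L[ℂ] H₂)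
    (hA : IsUnit A) (hA' : IsUnit A') (hC : IsUnit C) (hC' : IsUnit C')
    (h : ∀ (X : H₂ →L[ℂ] H₁) (Y : H₃ →L[ℂ] H₂),
      A ∘L X ∘L B ∘L Y ∘L C = A' ∘L X ∘L Y ∘L C') :
    ∃ lam : ℂ, lam ≠ 0 ∧ B = lam • ContinuousLinearMap.id ℂ H₂ := by
  obtain ⟨u₀, hu₀⟩ := exists_ne (0 : H₁)
  obtain ⟨g₀, hg₀⟩ := exists_ne (0 : H₂)
  obtain ⟨z₁, hz₁⟩ := exists_ne (0 : H₃)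
  set Ai : H₁ →L[ℂ] H₁ := ↑hA.unit⁻¹ with hAidef
  set Ci : H₃ →L[ℂ] H₃ := ↑hC.unit⁻¹ with hCidef
  set D : H₁ →L[ℂ] H₁ := Ai ∘L A' with hDdef
  set E : H₃ →L[ℂ] H₃ := C' ∘L Ci with hEdef
  have hCCi : ∀ z, C (Ci z) = z := fun z => aux_cancel_right hC z
  -- key pointwise identity with rank-one operators
  have key : ∀ (f g : H₂) (u : H₁) (v z : H₃),
      (⟪v, z⟫_ℂ * ⟪f, B g⟫_ℂ) • u = (⟪v, E z⟫_ℂ * ⟪f, g⟫_ℂ) • D u := by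
    intro f g u v z
    have hh := congrFun (congrArg DFunLike.coe
        (h ((innerSL ℂ f).smulRight u) ((innerSL ℂ v).smulRight g))) (Ci z)
    simp only [ContinuousLinearMap.comp_apply, ContinuousLinearMap.smulRight_apply,
      innerSL_apply_apply, map_smul, hCCi] at hh
    have hh2 := congrArg Ai hh
    simp only [map_smul] at hh2
    have hAu : Ai (A u) = u := aux_cancel_left hA u
    have hDu : Ai (A' u) = D u := rfl
    have hEz : C' (Ci z) = E z := rfl
    rw [hAu, hDu] at hh2
    rw [hEz] at hh2
    simpa [smul_smul] using hh2
  have hg : ⟪g₀, g₀⟫_ℂ ≠ 0 := inner_self_ne_zero.mpr hg₀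
  have hz : ⟪z₁, z₁⟫_ℂ ≠ 0 := inner_self_ne_zero.mpr hz₁
  -- E z₁ ≠ 0
  have hCiz₁ : Ci z₁ ≠ 0 := by
    intro h0
    apply hz₁
    have := hCCi z₁
    rw [h0] at this
    simpa using this.symm
  have hEz₁ : E z₁ ≠ 0 := by
    intro h0
    exact hCiz₁ (aux_inj hC' h0)
  have hEzz : ⟪E z₁, E z₁⟫_ℂ ≠ 0 := inner_self_ne_zero.mpr hEz₁
  -- D u₀ ≠ 0
  have hA'u₀ : A' u₀ ≠ 0 := fun h0 => hu₀ (aux_inj hA' h0)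
  have hDu₀ : D u₀ ≠ 0 := by
    intro h0
    apply hA'u₀
    have h1 : A (Ai (A' u₀)) = A' u₀ := aux_cancel_right hA (A' u₀)
    have h2 : Ai (A' u₀) = D u₀ := rfl
    rw [h2, h0] at h1
    simpa using h1.symm
  have hαne : ⟪E z₁, E z₁⟫_ℂ * ⟪g₀, g₀⟫_ℂ ≠ 0 := mul_ne_zero hEzz hg
  set μ : ℂ := (⟪E z₁, E z₁⟫_ℂ * ⟪g₀, g₀⟫_ℂ)⁻¹ * (⟪E z₁, z₁⟫_ℂ * ⟪g₀, B g₀⟫_ℂ) with hμdef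
  have hDscal : ∀ u, D u = μ • u := by
    intro u
    have hk := key g₀ g₀ u (E z₁) z₁
    calc D u = (⟪E z₁, E z₁⟫_ℂ * ⟪g₀, g₀⟫_ℂ)⁻¹ •
          ((⟪E z₁, E z₁⟫_ℂ * ⟪g₀, g₀⟫_ℂ) • D u) := by
          rw [smul_smul, inv_mul_cancel₀ hαne, one_smul]
      _ = (⟪E z₁, E z₁⟫_ℂ * ⟪g₀, g₀⟫_ℂ)⁻¹ •
          ((⟪E z₁, z₁⟫_ℂ * ⟪g₀, B g₀⟫_ℂ) • u) := by rw [← hk]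
      _ = μ • u := by rw [smul_smul, hμdef]
  have hμ : μ ≠ 0 := by
    intro h0
    apply hDu₀
    rw [hDscal u₀, h0, zero_smul]
  have hBg₀ : ⟪g₀, B g₀⟫_ℂ ≠ 0 := by
    intro h0
    apply hμ
    simp [hμdef, h0]
  -- scalar identities
  have scal : ∀ (f g : H₂),
      ⟪z₁, z₁⟫_ℂ * ⟪f, B g⟫_ℂ = ⟪z₁, E z₁⟫_ℂ * ⟪f, g⟫_ℂ * μ := by
    intro f g
    have hk := key f g u₀ z₁ z₁
    rw [hDscal u₀, smul_smul] at hk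
    exact smul_left_injective ℂ hu₀ hk
  have s2 := scal g₀ g₀
  refine ⟨⟪g₀, B g₀⟫_ℂ / ⟪g₀, g₀⟫_ℂ, div_ne_zero hBg₀ hg, ?_⟩
  ext g
  apply ext_inner_left ℂ
  intro f
  have s1 := scal f g
  have hmain : ⟪f, B g⟫_ℂ * ⟪g₀, g₀⟫_ℂ = ⟪g₀, B g₀⟫_ℂ * ⟪f, g⟫_ℂ := by
    apply mul_left_cancel₀ hz
    linear_combination ⟪g₀, g₀⟫_ℂ * s1 - ⟪f, g⟫_ℂ * s2
  have : ⟪f, ((⟪g₀, B g₀⟫_ℂ / ⟪g₀, g₀⟫_ℂ) • ContinuousLinearMap.id ℂ H₂) g⟫_ℂ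
      = (⟪g₀, B g₀⟫_ℂ / ⟪g₀, g₀⟫_ℂ) * ⟪f, g⟫_ℂ := by
    simp [inner_smul_right]
  rw [this]
  field_simp
  linear_combination hmain
end
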